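/- arXiv:2002.05854 — 8 statements merged into one kernel-verified Lean document; each statement's English description precedes it below -/
import Mathlib

section
/- In a greedy t-spanner, no edge can be shortcut by a factor of t: for any edge AB of the greedy t-spanner and any points A = P₀, P₁, …, P_k = B such that each P_iP_{i+1} is a spanner edge distinct from AB, we have Σ_{i=0}^{k−1} dist(P_i, P_{i+1}) > t·dist(A,B). -/
open scoped Classical

/-- The total Euclidean length of a polygonal path given by a list of points. -/
noncomputable def pathLength {α : Type*} [PseudoMetricSpace α] (l : List α) : ℝ :=
  (List.zipWith dist l l.tail).sum

/-- `l` is a walk from `u` to `v` whose consecutive pairs satisfy `Edge`. -/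
def IsPath {α : Type*} (Edge : α → α → Prop) (u v : α) (l : List α) : Prop :=
  l.Chain' Edge ∧ l.head? = some u ∧ l.getLast? = some v

/-- One step of the greedy spanner algorithm: add the pair `pq` to the current
edge set `S` unless the current graph already contains a path from `pq.1` to
`pq.2` of length at most `t` times their distance. -/
noncomputable def greedyStep {α : Type*} [MetricSpace α] (t : ℝ)
    (S : Set (α × α)) (pq : α × α) : Set (α × α) :=
  if ∃ l : List α, IsPath (fun a b => (a, b) ∈ S ∨ (b, a) ∈ S) pq.1 pq.2 l ∧
      pathLength l ≤ t * dist pq.1 pq.2 then S else insert pq S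

/-- The greedy spanner obtained by processing the list `pairs` in order. -/
noncomputable def greedySpanner {α : Type*} [MetricSpace α] (t : ℝ)
    (pairs : List (α × α)) : Set (α × α) :=
  pairs.foldl (greedyStep t) ∅


/-!
Not being shortcut is an invariant of the greedy construction. When `uv` is added, a walk that
shortcuts an older edge `AB` and uses `uv` either contains a walk `A ⇝ B` avoiding `uv`, which
is no shorter, or splits at the first and last use of `uv` into walks `A ⇝ x` and `y ⇝ B` with
`{x, y} = {u, v}`. In the latter case `x ⇝ A — B ⇝ y` is an older walk between `u` and `v` of
length at most `(t + 1)|AB| - |uv| ≤ t|uv|`, because `|AB| ≤ |uv|`; so `uv` would not have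
been added.
-/

section PathLength

variable {α : Type*} [PseudoMetricSpace α]

theorem pathLength_singleton (a : α) : pathLength [a] = 0 := by
  simp [pathLength]

theorem pathLength_cons_cons (a b : α) (l : List α) :
    pathLength (a :: b :: l) = dist a b + pathLength (b :: l) := by
  simp [pathLength]

theorem pathLength_nonneg : ∀ l : List α, 0 ≤ pathLength l
  | [] => le_rfl
  | [a] => (pathLength_singleton a).ge
  | a :: b :: l => by
    rw [pathLength_cons_cons]
    exact add_nonneg dist_nonneg (pathLength_nonneg (b :: l))

theorem pathLength_concat_append_cons (l₁ : List α) (a b : α) (l₂ : List α) :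
    pathLength ((l₁ ++ [a]) ++ b :: l₂) =
      pathLength (l₁ ++ [a]) + dist a b + pathLength (b :: l₂) := by
  induction l₁ with
  | nil => simp [pathLength_cons_cons, pathLength_singleton]
  | cons c l₁ ih =>
    cases l₁ with
    | nil =>
      simp only [List.nil_append, List.cons_append, pathLength_cons_cons, pathLength_singleton]
      ring
    | cons d l₁ =>
      simp only [List.cons_append] at ih ⊢
      rw [pathLength_cons_cons, pathLength_cons_cons, ih]
      ring

theorem pathLength_reverse : ∀ l : List α, pathLength l.reverse = pathLength l
  | [] => rfl
  | [_] => rfl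
  | a :: b :: l => by
    have h := pathLength_concat_append_cons l.reverse b a []
    rw [List.reverse_cons, List.reverse_cons, h, ← List.reverse_cons, pathLength_reverse (b :: l),
      pathLength_cons_cons, pathLength_singleton, dist_comm]
    ring

theorem dist_eq_of_sym2_eq {x y u v : α} (h : s(x, y) = s(u, v)) : dist x y = dist u v := by
  rcases Sym2.eq_iff.mp h with ⟨rfl, rfl⟩ | ⟨rfl, rfl⟩
  · rfl
  · exact dist_comm _ _

end PathLength

section IsPath

variable {α : Type*} {E E' : α → α → Prop} {a b c : α} {l l₁ l₂ : List α}

theorem isPath_iff : IsPath E a b l ↔ l.IsChain E ∧ l.head? = some a ∧ l.getLast? = some b :=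
  Iff.rfl

theorem isPath_singleton (a : α) : IsPath E a a [a] :=
  ⟨List.isChain_singleton a, rfl, rfl⟩

theorem isPath_singleton_iff : IsPath E a b [c] ↔ c = a ∧ c = b := by
  simp [isPath_iff]

theorem isPath_cons_cons_iff {d : α} :
    IsPath E a b (c :: d :: l) ↔ c = a ∧ E a d ∧ IsPath E d b (d :: l) := by
  simp only [isPath_iff, List.isChain_cons_cons, List.head?_cons, Option.some.injEq,
    List.getLast?_cons_cons]
  constructor
  · rintro ⟨⟨hcd, hch⟩, rfl, hlast⟩
    exact ⟨rfl, hcd, hch, trivial, hlast⟩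
  · rintro ⟨rfl, hcd, hch, -, hlast⟩
    exact ⟨⟨hcd, hch⟩, rfl, hlast⟩

theorem IsPath.exists_eq_cons (h : IsPath E a b l) : ∃ l', l = a :: l' := by
  obtain ⟨-, hhead, -⟩ := h
  cases l with
  | nil => simp at hhead
  | cons c l' => exact ⟨l', by simpa using hhead⟩

theorem IsPath.ne_nil (h : IsPath E a b l) : l ≠ [] := by
  obtain ⟨l', rfl⟩ := h.exists_eq_cons
  exact List.cons_ne_nil _ _

theorem IsPath.cons (hab : E a b) (h : IsPath E b c l) : IsPath E a c (a :: l) := by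
  obtain ⟨l', rfl⟩ := h.exists_eq_cons
  exact isPath_cons_cons_iff.mpr ⟨rfl, hab, h⟩

theorem IsPath.mono (hE : ∀ ⦃x y⦄, E x y → E' x y) (h : IsPath E a b l) : IsPath E' a b l :=
  ⟨h.1.imp hE, h.2⟩

theorem IsPath.reverse (hE : ∀ ⦃x y⦄, E x y → E y x) (h : IsPath E a b l) :
    IsPath E b a l.reverse :=
  ⟨List.isChain_reverse.mpr (h.1.imp fun _ _ hxy => hE hxy),
    by rw [List.head?_reverse, h.2.2], by rw [List.getLast?_reverse, h.2.1]⟩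

theorem IsPath.append {d : α} (h₁ : IsPath E a b l₁) (hbc : E b c) (h₂ : IsPath E c d l₂) :
    IsPath E a d (l₁ ++ l₂) :=
  ⟨List.isChain_append.mpr ⟨h₁.1, h₂.1, fun x hx y hy => by
      rw [h₁.2.2, Option.mem_some_iff] at hx
      rw [h₂.2.1, Option.mem_some_iff] at hy
      exact hx ▸ hy ▸ hbc⟩,
    by rw [List.head?_append, h₁.2.1]; rfl,
    by rw [List.getLast?_append, h₂.2.2]; rfl⟩

variable [PseudoMetricSpace α]

theorem IsPath.pathLength_cons (h : IsPath E b c l) (a : α) :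
    pathLength (a :: l) = dist a b + pathLength l := by
  obtain ⟨l', rfl⟩ := h.exists_eq_cons
  exact pathLength_cons_cons a b l'

theorem IsPath.pathLength_append {d : α} (h₁ : IsPath E a b l₁) (h₂ : IsPath E c d l₂) :
    pathLength (l₁ ++ l₂) = pathLength l₁ + dist b c + pathLength l₂ := by
  obtain ⟨l₁', rfl⟩ := List.getLast?_eq_some_iff.mp h₁.2.2
  obtain ⟨l₂', rfl⟩ := h₂.exists_eq_cons
  exact pathLength_concat_append_cons l₁' b c l₂'

/-- `l₁` ends at the first use of the edge `uv` and `l₂` starts after its last use. -/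
theorem IsPath.exists_avoiding_or_split {u v : α} :
    ∀ {a : α} {l : List α}, IsPath (fun x y => E x y ∨ s(x, y) = s(u, v)) a b l →
      (∃ l', IsPath E a b l' ∧ pathLength l' ≤ pathLength l) ∨
      ∃ x y l₁ l₂, s(x, y) = s(u, v) ∧ IsPath E a x l₁ ∧ IsPath E y b l₂ ∧
        pathLength l₁ + dist u v + pathLength l₂ ≤ pathLength l
  | _, [], h => absurd rfl h.ne_nil
  | a, [c], h => by
    obtain ⟨rfl, rfl⟩ := isPath_singleton_iff.mp h
    exact Or.inl ⟨[c], isPath_singleton c, le_rfl⟩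
  | a, c :: d :: l, h => by
    obtain ⟨rfl, hcd, hrest⟩ := isPath_cons_cons_iff.mp h
    rw [pathLength_cons_cons]
    have := pathLength_nonneg (d :: l)
    rcases exists_avoiding_or_split hrest with ⟨l', hl', hlen⟩ | ⟨x, y, l₁, l₂, hxy, h₁, h₂, hlen⟩
    · rcases hcd with hE | huv
      · refine Or.inl ⟨c :: l', hl'.cons hE, ?_⟩
        rw [hl'.pathLength_cons]
        linarith
      · refine Or.inr ⟨c, d, [c], l', huv, isPath_singleton c, hl', ?_⟩
        rw [pathLength_singleton, dist_eq_of_sym2_eq huv]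
        linarith
    · have := pathLength_nonneg l₁
      rcases hcd with hE | huv
      · refine Or.inr ⟨x, y, c :: l₁, l₂, hxy, h₁.cons hE, h₂, ?_⟩
        rw [h₁.pathLength_cons]
        linarith
      · have hdist := dist_eq_of_sym2_eq huv
        have := dist_nonneg (x := u) (y := v)
        by_cases hcy : c = y
        · subst hcy
          exact Or.inl ⟨l₂, h₂, by linarith⟩
        · have hcy' : s(c, y) = s(u, v) := ((Sym2.mem_and_mem_iff hcy).mp
            ⟨huv ▸ Sym2.mem_mk_left c d, hxy ▸ Sym2.mem_mk_right x y⟩).symm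
          refine Or.inr ⟨c, y, [c], l₂, hcy', isPath_singleton c, h₂, ?_⟩
          rw [pathLength_singleton]
          linarith

end IsPath

namespace GreedySpanner

variable {α : Type*} {S : Set (α × α)} {a b u v A B : α}

def Adj (S : Set (α × α)) (a b : α) : Prop := (a, b) ∈ S ∨ (b, a) ∈ S

theorem Adj.symm (h : Adj S a b) : Adj S b a := Or.symm h

theorem adj_insert : Adj (insert (u, v) S) a b ↔ s(a, b) = s(u, v) ∨ Adj S a b := by
  simp only [Adj, Set.mem_insert_iff, Prod.mk.injEq, Sym2.eq_iff]
  tauto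

variable [MetricSpace α] {t : ℝ}

def NoShortcut (t : ℝ) (S : Set (α × α)) : Prop :=
  ∀ ⦃A B : α⦄, Adj S A B → ∀ ⦃l : List α⦄,
    IsPath (fun a b => Adj S a b ∧ s(a, b) ≠ s(A, B)) A B l → t * dist A B < pathLength l

theorem noShortcut_empty : NoShortcut t (∅ : Set (α × α)) := fun _ _ hAB => by
  simp [Adj] at hAB

theorem NoShortcut.ne (hS : NoShortcut t S) (hAB : Adj S A B) : A ≠ B := by
  rintro rfl
  simpa [pathLength_singleton] using hS hAB (isPath_singleton A)

theorem NoShortcut.insert (hS : NoShortcut t S) (hle : ∀ e ∈ S, dist e.1 e.2 ≤ dist u v)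
    (huv : ∀ l, IsPath (Adj S) u v l → t * dist u v < pathLength l) :
    NoShortcut t (insert (u, v) S) := by
  have huv' : ∀ x y l, s(x, y) = s(u, v) → IsPath (Adj S) x y l →
      t * dist u v < pathLength l := by
    intro x y l hxy hl
    rcases Sym2.eq_iff.mp hxy with ⟨rfl, rfl⟩ | ⟨rfl, rfl⟩
    · exact huv l hl
    · simpa [pathLength_reverse] using huv _ (hl.reverse fun _ _ => Adj.symm)
  intro A B hAB l hl
  by_cases hABuv : s(A, B) = s(u, v)
  · rw [dist_eq_of_sym2_eq hABuv]
    exact huv' A B l hABuv <| hl.mono fun a b ⟨hab, hne⟩ =>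
      (adj_insert.mp hab).resolve_left (hABuv ▸ hne)
  have hAB' : Adj S A B := (adj_insert.mp hAB).resolve_left hABuv
  have hl' : IsPath (fun a b => (Adj S a b ∧ s(a, b) ≠ s(A, B)) ∨ s(a, b) = s(u, v)) A B l :=
    hl.mono fun a b ⟨hab, hne⟩ => (adj_insert.mp hab).elim Or.inr fun h => Or.inl ⟨h, hne⟩
  by_contra! hlong
  rcases hl'.exists_avoiding_or_split with ⟨l', hl', hlen⟩ | ⟨x, y, l₁, l₂, hxy, h₁, h₂, hlen⟩
  · linarith [hS hAB' hl']
  have hABuv_le : dist A B ≤ dist u v := by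
    rcases hAB' with h | h
    · exact hle _ h
    · exact dist_comm A B ▸ hle _ h
  have ht : 0 ≤ t := le_of_mul_le_mul_right (by linarith [pathLength_nonneg l])
    (dist_pos.mpr (hS.ne hAB'))
  have h₁' := (h₁.mono fun _ _ h => h.1).reverse fun _ _ => Adj.symm
  have h₂' := (h₂.mono fun _ _ h => h.1).reverse fun _ _ => Adj.symm
  -- `x → A → B → y` is a walk of `S` between `u` and `v`, short enough to have prevented `uv`.
  have hshort := huv' x y _ hxy (h₁'.append hAB' h₂')
  rw [h₁'.pathLength_append h₂', pathLength_reverse, pathLength_reverse] at hshort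
  nlinarith [mul_le_mul_of_nonneg_left hABuv_le ht]

theorem noShortcut_foldl_greedyStep :
    ∀ {pairs : List (α × α)} {S : Set (α × α)},
      pairs.Pairwise (fun x y => dist x.1 x.2 ≤ dist y.1 y.2) →
      (∀ e ∈ S, ∀ f ∈ pairs, dist e.1 e.2 ≤ dist f.1 f.2) → NoShortcut t S →
      NoShortcut t (pairs.foldl (greedyStep t) S)
  | [], _, _, _, hS => hS
  | (u, v) :: pairs, S, hsorted, hle, hS => by
    obtain ⟨huv_le, hsorted⟩ := List.pairwise_cons.mp hsorted
    have hle' : ∀ e ∈ S, ∀ f ∈ pairs, dist e.1 e.2 ≤ dist f.1 f.2 :=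
      fun e he f hf => hle e he f (List.mem_cons_of_mem _ hf)
    rw [List.foldl_cons, greedyStep]
    split_ifs with hshortcut
    · exact noShortcut_foldl_greedyStep hsorted hle' hS
    refine noShortcut_foldl_greedyStep hsorted ?_ <|
      hS.insert (fun e he => hle e he _ List.mem_cons_self) fun l hl =>
        not_le.mp fun hlen => hshortcut ⟨l, hl, hlen⟩
    rintro e he f hf
    rcases Set.mem_insert_iff.mp he with rfl | he
    · exact huv_le f hf
    · exact hle' e he f hf

theorem noShortcut_greedySpanner {pairs : List (α × α)}
    (hsorted : pairs.Pairwise (fun x y => dist x.1 x.2 ≤ dist y.1 y.2)) :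
    NoShortcut t (greedySpanner t pairs) :=
  noShortcut_foldl_greedyStep hsorted (by simp) noShortcut_empty

end GreedySpanner

theorem stmt3_general {α : Type*} [MetricSpace α] (t : ℝ)
    (pairs : List (α × α))
    (hsorted : pairs.Pairwise (fun x y => dist x.1 x.2 ≤ dist y.1 y.2))
    (S : Set (α × α)) (hS : S = greedySpanner t pairs)
    (A B : α) (hAB : (A, B) ∈ S ∨ (B, A) ∈ S)
    (l : List α)
    (hl : IsPath (fun a b => ((a, b) ∈ S ∨ (b, a) ∈ S) ∧
      ¬((a = A ∧ b = B) ∨ (a = B ∧ b = A))) A B l) :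
    t * dist A B < pathLength l := by
  subst hS
  exact GreedySpanner.noShortcut_greedySpanner hsorted hAB <|
    hl.mono fun _ _ ⟨hab, hne⟩ => ⟨hab, by rwa [Ne, Sym2.eq_iff]⟩

/-- Short-cutting lemma: no edge AB of a greedy t-spanner can be shortcut by a
factor of t by a path of other spanner edges. -/
theorem stmt3 {α : Type*} [MetricSpace α] (t : ℝ) (ht : 1 < t)
    (pairs : List (α × α)) (hd : ∀ pq ∈ pairs, pq.1 ≠ pq.2)
    (hsorted : pairs.Pairwise (fun x y => dist x.1 x.2 ≤ dist y.1 y.2))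
    (S : Set (α × α)) (hS : S = greedySpanner t pairs)
    (A B : α) (hAB : (A, B) ∈ S ∨ (B, A) ∈ S)
    (l : List α)
    (hl : IsPath (fun a b => ((a, b) ∈ S ∨ (b, a) ∈ S) ∧
      ¬((a = A ∧ b = B) ∨ (a = B ∧ b = A))) A B l)
    (hlen : 2 ≤ l.length) :
    t * dist A B < pathLength l :=
  stmt3_general t pairs hsorted S hS A B hAB l hl
end

section
/- Let t > 1 and 0 < θ < (t−1)/(2t). If M, N, P, Q are points in the plane with segments MN and PQ making angle at most θ, the segments intersect at an interior point I, the orthogonal projections of P and Q onto the line through a fixed baseline direction (making angle at most θ with both segments) lie between the projections of M and N, then t·dist(M,P) + dist(P,Q) + t·dist(N,Q) ≤ t·dist(M,N). -/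
noncomputable abbrev P2 := EuclideanSpace ℝ (Fin 2)

/-!
Let `I` be the crossing point and `c = cos θ`. On each side of `I`, say the side of `M` and `P`,
the vectors `u = I - M` and `w = I - P` make an angle at most `θ`, and the position of the
projection of `P` forces `‖w‖ c ≤ ‖u‖`. Then `‖u - w‖² ≤ ‖u‖² - 2c‖u‖‖w‖ + ‖w‖²`, and the bound
`θ < (t - 1) / (2t)` makes `c` close enough to `1` that this is at most `(‖u‖ - ‖w‖ / t)²`,
i.e. `t · dist M P ≤ t ‖u‖ - ‖w‖`. Adding the two sides gives the claim, since
`‖I - M‖ + ‖N - I‖ = dist M N` and `‖I - P‖ + ‖Q - I‖ = dist P Q`.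
-/

open Real InnerProductGeometry
open scoped RealInnerProductSpace

section CosBounds

variable {t θ : ℝ}

lemma lt_one_half_of_lt (ht : 1 < t) (hθ : θ < (t - 1) / (2 * t)) : θ < 1 / 2 := by
  have ht0 : 0 < t := by linarith
  calc θ < (t - 1) / (2 * t) := hθ
    _ < 1 / 2 := by rw [div_lt_div_iff₀ (by positivity) two_pos]; linarith

lemma lt_pi_div_two_of_lt (ht : 1 < t) (hθ : θ < (t - 1) / (2 * t)) : θ < π / 2 := by
  linarith [lt_one_half_of_lt ht hθ, pi_gt_three]

lemma one_lt_mul_cos (ht : 1 < t) (hθ0 : 0 ≤ θ) (hθ : θ < (t - 1) / (2 * t)) :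
    1 < t * cos θ := by
  have hθt : 2 * t * θ < t - 1 := by rwa [lt_div_iff₀ (by positivity), mul_comm] at hθ
  have := lt_one_half_of_lt ht hθ
  nlinarith [one_sub_sq_div_two_le_cos (x := θ)]

lemma sq_le_mul_cos_sq_add_sq (ht : 1 < t) (hθ0 : 0 ≤ θ) (hθ : θ < (t - 1) / (2 * t)) :
    t ^ 2 ≤ (t * cos θ) ^ 2 + (t * cos θ - 1) ^ 2 := by
  have hθt : 2 * t * θ < t - 1 := by rwa [lt_div_iff₀ (by positivity), mul_comm] at hθ
  nlinarith [one_sub_sq_div_two_le_cos (x := θ), cos_le_one θ, sq_nonneg (t - 1),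
    sq_nonneg (t * θ), mul_nonneg (by linarith : (0 : ℝ) ≤ t) hθ0, sq_nonneg (1 - cos θ)]

end CosBounds

section InnerProductSpace

variable {E : Type*} [NormedAddCommGroup E] [InnerProductSpace ℝ E]

lemma mul_cos_le_inner_of_angle_le {u w : E} {θ : ℝ} (hθ : θ ≤ π) (h : angle u w ≤ θ) :
    ‖u‖ * ‖w‖ * cos θ ≤ ⟪u, w⟫ := by
  rw [← cos_angle_mul_norm_mul_norm, mul_comm]
  exact mul_le_mul_of_nonneg_right
    (cos_le_cos_of_nonneg_of_le_pi (angle_nonneg u w) hθ h) (by positivity)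

lemma norm_mul_le_of_inner_le {u w v : E} {c : ℝ} (hv : v ≠ 0)
    (hw : ‖w‖ * ‖v‖ * c ≤ ⟪w, v⟫) (h : ⟪w, v⟫ ≤ ⟪u, v⟫) : ‖w‖ * c ≤ ‖u‖ := by
  refine le_of_mul_le_mul_right ?_ (norm_pos_iff.2 hv)
  calc ‖w‖ * c * ‖v‖ = ‖w‖ * ‖v‖ * c := by ring
    _ ≤ ‖u‖ * ‖v‖ := hw.trans (h.trans (real_inner_le_norm u v))

lemma mul_norm_sub_le_of_inner_ge {u w : E} {t c : ℝ} (ht : 0 < t) (htc : 1 ≤ t * c)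
    (hquad : t ^ 2 ≤ (t * c) ^ 2 + (t * c - 1) ^ 2)
    (hinner : ‖u‖ * ‖w‖ * c ≤ ⟪u, w⟫) (hlen : ‖w‖ * c ≤ ‖u‖) :
    t * ‖u - w‖ ≤ t * ‖u‖ - ‖w‖ := by
  have hw := norm_nonneg w
  have hrhs : 0 ≤ t * ‖u‖ - ‖w‖ := by nlinarith
  refine le_of_sq_le_sq ?_ hrhs
  rw [mul_pow, norm_sub_sq_real]
  nlinarith [mul_le_mul_of_nonneg_left hlen (mul_nonneg (by positivity) (sub_nonneg.2 htc)),
    mul_nonneg (sq_nonneg ‖w‖) (sub_nonneg.2 hquad)]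

lemma mul_norm_sub_le_of_angle_le {u w v : E} {t θ : ℝ} (ht : 1 < t)
    (hθ : θ < (t - 1) / (2 * t)) (huw : angle u w ≤ θ) (hwv : angle w v ≤ θ)
    (hproj : ⟪w, v⟫ ≤ ⟪u, v⟫) :
    t * ‖u - w‖ ≤ t * ‖u‖ - ‖w‖ := by
  have hθ0 : 0 ≤ θ := (angle_nonneg u w).trans huw
  have hθπ := lt_pi_div_two_of_lt ht hθ
  have hv : v ≠ 0 := by
    rintro rfl
    rw [angle_zero_right] at hwv
    linarith
  refine mul_norm_sub_le_of_inner_ge (by linarith) (one_lt_mul_cos ht hθ0 hθ).le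
    (sq_le_mul_cos_sq_add_sq ht hθ0 hθ) (mul_cos_le_inner_of_angle_le (by linarith) huw)
    (norm_mul_le_of_inner_le hv (mul_cos_le_inner_of_angle_le (by linarith) hwv) hproj)

lemma mul_norm_smul_sub_smul_le {a b v : E} {t θ r s : ℝ} (ht : 1 < t)
    (hθ : θ < (t - 1) / (2 * t)) (hab : angle a b ≤ θ) (hbv : angle b v ≤ θ)
    (hr : 0 < r) (hs : 0 < s) (hproj : s * ⟪b, v⟫ ≤ r * ⟪a, v⟫) :
    t * ‖r • a - s • b‖ ≤ t * (r * ‖a‖) - s * ‖b‖ := by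
  have := mul_norm_sub_le_of_angle_le (u := r • a) (w := s • b) (v := v) ht hθ
    (by rwa [angle_smul_left_of_pos _ _ hr, angle_smul_right_of_pos _ _ hs])
    (by rwa [angle_smul_left_of_pos _ _ hs]) (by simpa only [real_inner_smul_left])
  rwa [norm_smul_of_nonneg hr.le, norm_smul_of_nonneg hs.le] at this

end InnerProductSpace

theorem stmt4_general (t θ : ℝ) (ht : 1 < t) (hθ : θ < (t - 1) / (2 * t))
    (M N P Q I v : P2)
    (hpar : InnerProductGeometry.angle (N - M) (Q - P) ≤ θ)
    (hbase1 : InnerProductGeometry.angle (N - M) v ≤ θ)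
    (hbase2 : InnerProductGeometry.angle (Q - P) v ≤ θ)
    (hI : I ∈ openSegment ℝ M N ∩ openSegment ℝ P Q)
    (hP : (inner ℝ P v : ℝ) ∈ Set.uIcc (inner ℝ M v : ℝ) (inner ℝ N v : ℝ))
    (hQ : (inner ℝ Q v : ℝ) ∈ Set.uIcc (inner ℝ M v : ℝ) (inner ℝ N v : ℝ)) :
    t * dist M P + dist P Q + t * dist N Q ≤ t * dist M N := by
  obtain ⟨⟨r, ⟨hr0, hr1⟩, hIr⟩, ⟨s, ⟨hs0, hs1⟩, hIs⟩⟩ := hI.imp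
    (fun h ↦ (openSegment_eq_image' ℝ M N ▸ h)) (fun h ↦ (openSegment_eq_image' ℝ P Q ▸ h))
  have hPM : P - M = r • (N - M) - s • (Q - P) := by
    linear_combination (norm := module) hIs - hIr
  have hNQ : N - Q = (1 - r) • (N - M) - (1 - s) • (Q - P) := by
    linear_combination (norm := module) hIr - hIs
  have hθπ := lt_pi_div_two_of_lt ht hθ
  have hMN : ⟪M, v⟫ ≤ ⟪N, v⟫ := by
    have := mul_cos_le_inner_of_angle_le (by linarith [pi_pos]) (hbase1.trans hθπ.le)
    rw [cos_pi_div_two, mul_zero, inner_sub_left] at this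
    linarith
  rw [Set.uIcc_of_le hMN] at hP hQ
  have hinner_PM := congrArg (⟪·, v⟫) hPM
  have hinner_NQ := congrArg (⟪·, v⟫) hNQ
  simp only [inner_sub_left, real_inner_smul_left] at hinner_PM hinner_NQ
  have hside_M := mul_norm_smul_sub_smul_le ht hθ hpar hbase2 hr0 hs0
    (by simp only [inner_sub_left]; linarith [hP.1])
  have hside_N := mul_norm_smul_sub_smul_le ht hθ hpar hbase2 (sub_pos.2 hr1) (sub_pos.2 hs1)
    (by simp only [inner_sub_left]; linarith [hQ.2])
  rw [dist_comm M P, dist_comm P Q, dist_comm M N, dist_eq_norm, dist_eq_norm, dist_eq_norm,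
    dist_eq_norm, hPM, hNQ]
  linarith

/-- Lemma (intersecting almost-parallel segments are endpoint-ordered): if two
θ-parallel segments MN and PQ (θ < (t−1)/(2t)) intersect at an interior point,
and the orthogonal projections of P and Q onto a baseline direction v (making
angle at most θ with both segments) lie between the projections of M and N,
then t·‖MP‖ + ‖PQ‖ + t·‖NQ‖ ≤ t·‖MN‖. -/
theorem stmt4 (t θ : ℝ) (ht : 1 < t) (hθ0 : 0 < θ) (hθ : θ < (t - 1) / (2 * t))
    (M N P Q I v : P2) (hMN : N ≠ M) (hPQ : Q ≠ P) (hv : ‖v‖ = 1)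
    (hpar : InnerProductGeometry.angle (N - M) (Q - P) ≤ θ)
    (hbase1 : InnerProductGeometry.angle (N - M) v ≤ θ)
    (hbase2 : InnerProductGeometry.angle (Q - P) v ≤ θ)
    (hI : I ∈ openSegment ℝ M N ∩ openSegment ℝ P Q)
    (hP : (inner ℝ P v : ℝ) ∈ Set.uIcc (inner ℝ M v : ℝ) (inner ℝ N v : ℝ))
    (hQ : (inner ℝ Q v : ℝ) ∈ Set.uIcc (inner ℝ M v : ℝ) (inner ℝ N v : ℝ)) :
    t * dist M P + dist P Q + t * dist N Q ≤ t * dist M N :=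
  stmt4_general t θ ht hθ M N P Q I v hpar hbase1 hbase2 hI hP hQ
end

section
/- Suppose MN and PQ are segments in ℝ² with dist(M,N) ≥ dist(P,Q), dist(M,P) ≥ dist(N,Q), and the angle between them is θ. Then dist(M,N) − dist(P,Q) ≥ dist(M,P) − dist(N,Q) − 2·dist(P,Q)·sin(θ/2). -/
open scoped RealInnerProductSpace

/-- If ‖MN‖ ≥ ‖PQ‖ and ‖MP‖ ≥ ‖NQ‖ and the segments make angle θ, then
‖MN‖ − ‖PQ‖ ≥ ‖MP‖ − ‖NQ‖ − 2‖PQ‖ sin(θ/2). -/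
theorem stmt7 (M N P Q : P2) (hMN : N ≠ M) (hPQ : Q ≠ P)
    (θ : ℝ) (hθ : θ = InnerProductGeometry.angle (N - M) (Q - P))
    (h1 : dist P Q ≤ dist M N) (h2 : dist N Q ≤ dist M P) :
    dist M N - dist P Q ≥ dist M P - dist N Q - 2 * dist P Q * Real.sin (θ / 2) := by
  set u : P2 := N - M with hu
  set v : P2 := Q - P with hv
  have ha : dist M N = ‖u‖ := by rw [dist_eq_norm, hu, norm_sub_rev]
  have hb : dist P Q = ‖v‖ := by rw [dist_eq_norm, hv, norm_sub_rev]
  set a := ‖u‖ with han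
  set b := ‖v‖ with hbn
  set s := Real.sin (θ / 2) with hs
  -- angle facts
  have hθ0 : 0 ≤ θ := hθ ▸ InnerProductGeometry.angle_nonneg _ _
  have hθpi : θ ≤ Real.pi := hθ ▸ InnerProductGeometry.angle_le_pi _ _
  have hs0 : 0 ≤ s := Real.sin_nonneg_of_nonneg_of_le_pi (by linarith)
    (by linarith [Real.pi_pos])
  have hs1 : s ≤ 1 := Real.sin_le_one _
  have hb0 : 0 ≤ b := norm_nonneg _
  have hab : b ≤ a := by rw [← ha, ← hb]; exact h1
  -- inner product
  have hinner : ⟪u, v⟫ = a * b * Real.cos θ := by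
    rw [hθ]
    rw [← InnerProductGeometry.cos_angle_mul_norm_mul_norm u v]
    ring
  have hcos : Real.cos θ = 1 - 2 * s ^ 2 := by
    rw [hs, show θ = 2 * (θ / 2) by ring, Real.cos_two_mul, Real.cos_sq']
    ring
  have hinner2 : ⟪v, u⟫ = a * b * Real.cos θ := by rw [real_inner_comm]; exact hinner
  have hnsq : ‖u - v‖ ^ 2 = (a - b) ^ 2 + 4 * a * b * s ^ 2 := by
    rw [← real_inner_self_eq_norm_sq, inner_sub_sub_self, hinner, hinner2,
      real_inner_self_eq_norm_sq, real_inner_self_eq_norm_sq, hcos]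
    ring
  -- key: ‖u - v‖ ≤ (a - b) + 2 * b * s
  have hkey : ‖u - v‖ ≤ (a - b) + 2 * b * s := by
    have hR : 0 ≤ (a - b) + 2 * b * s := by nlinarith
    nlinarith [norm_nonneg (u - v), sq_nonneg (‖u - v‖ - ((a - b) + 2 * b * s)),
      mul_nonneg (mul_nonneg hb0 hs0) (mul_nonneg (sub_nonneg.2 hab) (sub_nonneg.2 hs1))]
  -- triangle
  have htri : dist M P - dist N Q ≤ ‖u - v‖ := by
    have h3 : dist M P = ‖P - M‖ := by rw [dist_eq_norm, norm_sub_rev]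
    have h4 : dist N Q = ‖Q - N‖ := by rw [dist_eq_norm, norm_sub_rev]
    have h5 : u - v = (P - M) - (Q - N) := by rw [hu, hv]; abel
    rw [h3, h4, h5]
    exact norm_sub_norm_le _ _
  rw [ha, hb]
  linarith [htri, hkey]
end

section
/- Let t > 1 and let S be a graph on points in ℝ² satisfying: for all distinct edges MN and PQ of S (with all four endpoints possibly shared), t·dist(M,P) + dist(P,Q) + t·dist(Q,N) > t·dist(M,N) and t·dist(P,M) + dist(M,N) + t·dist(N,Q) > t·dist(P,Q) (no edge is shortcut via the other). Then for any two such edges, max(dist(M,P), dist(N,Q)) ≥ ((t−1)/(2t))·min(dist(M,N), dist(P,Q)). -/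
/-- If two edges MN and PQ of a graph on points of the plane satisfy the
no-shortcut conditions (via the paths M–P–Q–N and P–M–N–Q), then
max(‖MP‖, ‖NQ‖) ≥ ((t−1)/(2t))·min(‖MN‖, ‖PQ‖). -/
theorem stmt8 (t : ℝ) (ht : 1 < t)
    (Edge : P2 → P2 → Prop)
    (h : ∀ M N P Q : P2, Edge M N → Edge P Q → ¬(M = P ∧ N = Q) →
      t * dist M P + dist P Q + t * dist Q N > t * dist M N ∧
      t * dist P M + dist M N + t * dist N Q > t * dist P Q)
    (M N P Q : P2) (hMN : Edge M N) (hPQ : Edge P Q) (hne : ¬(M = P ∧ N = Q)) :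
    max (dist M P) (dist N Q) ≥ ((t - 1) / (2 * t)) * min (dist M N) (dist P Q) := by
  obtain ⟨h1, h2⟩ := h M N P Q hMN hPQ hne
  rw [dist_comm P M] at h2
  rw [dist_comm Q N] at h1
  have ht0 : (0:ℝ) < t := by linarith
  rw [ge_iff_le, div_mul_eq_mul_div, div_le_iff₀ (by linarith)]
  rcases le_total (dist M N) (dist P Q) with hm | hm <;>
    rcases le_total (dist M P) (dist N Q) with hx | hx <;>
    simp [min_eq_left, min_eq_right, max_eq_left, max_eq_right, hm, hx] <;>
    nlinarith
end

section
/- Fix t > 1, α, β with 0 < α ≤ β, and a segment AB in ℝ² with dist(A,B) > 0. Let E be a family of segments PQ in ℝ² such that (i) each PQ crosses AB (intersects its interior), (ii) α·dist(A,B) ≤ dist(P,Q) ≤ β·dist(A,B) for each PQ ∈ E, and (iii) for any two distinct segments MN and PQ in E, max(dist(M,P), dist(N,Q)) ≥ ((t−1)/(2t))·min(dist(M,N), dist(P,Q)) and max(dist(M,Q), dist(N,P)) ≥ ((t−1)/(2t))·min(dist(M,N), dist(P,Q)). Then the number of segments in E is at most [ (2β(2β+1)/α²) · (8t²/(t−1)²)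 ]². -/
open Finset

namespace SpannerCrossing

section Frame

variable (A B : P2)

noncomputable def alongCoord (P : P2) : ℝ :=
  ((B 0 - A 0) * (P 0 - A 0) + (B 1 - A 1) * (P 1 - A 1)) / dist A B

noncomputable def acrossCoord (P : P2) : ℝ :=
  ((B 0 - A 0) * (P 1 - A 1) - (B 1 - A 1) * (P 0 - A 0)) / dist A B

variable {A B}

lemma dist_sq_eq (P Q : P2) : dist P Q ^ 2 = (P 0 - Q 0) ^ 2 + (P 1 - Q 1) ^ 2 := by
  rw [EuclideanSpace.dist_eq, Real.sq_sqrt (Finset.sum_nonneg fun i _ => sq_nonneg _)]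
  simp [Fin.sum_univ_two, Real.dist_eq, sq_abs]

lemma dist_sq_eq_coord (hAB : A ≠ B) (P Q : P2) :
    dist P Q ^ 2 = (alongCoord A B P - alongCoord A B Q) ^ 2
      + (acrossCoord A B P - acrossCoord A B Q) ^ 2 := by
  have hd : dist A B ≠ 0 := dist_ne_zero.mpr hAB
  rw [dist_sq_eq P Q, alongCoord, alongCoord, acrossCoord, acrossCoord, div_sub_div_same,
    div_sub_div_same, div_pow, div_pow, ← add_div, eq_div_iff (pow_ne_zero 2 hd), dist_sq_eq A B]
  ring

lemma alongCoord_sub_mem_Icc (hAB : A ≠ B) (P Q : P2) :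
    -dist P Q ≤ alongCoord A B P - alongCoord A B Q ∧
      alongCoord A B P - alongCoord A B Q ≤ dist P Q :=
  abs_le_of_sq_le_sq' (by rw [dist_sq_eq_coord hAB]; nlinarith) dist_nonneg

lemma acrossCoord_sub_mem_Icc (hAB : A ≠ B) (P Q : P2) :
    -dist P Q ≤ acrossCoord A B P - acrossCoord A B Q ∧
      acrossCoord A B P - acrossCoord A B Q ≤ dist P Q :=
  abs_le_of_sq_le_sq' (by rw [dist_sq_eq_coord hAB]; nlinarith) dist_nonneg

lemma coord_of_mem_segment {Y : P2} (hY : Y ∈ segment ℝ A B) :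
    0 ≤ alongCoord A B Y ∧ alongCoord A B Y ≤ dist A B ∧ acrossCoord A B Y = 0 := by
  obtain ⟨a, b, ha, hb, hab, rfl⟩ := hY
  have hY0 : (a • A + b • B) 0 - A 0 = b * (B 0 - A 0) := by
    simp only [PiLp.add_apply, PiLp.smul_apply, smul_eq_mul]; linear_combination A 0 * hab
  have hY1 : (a • A + b • B) 1 - A 1 = b * (B 1 - A 1) := by
    simp only [PiLp.add_apply, PiLp.smul_apply, smul_eq_mul]; linear_combination A 1 * hab
  have halong : alongCoord A B (a • A + b • B) = b * dist A B := by
    have hsq : (B 0 - A 0) * (b * (B 0 - A 0)) + (B 1 - A 1) * (b * (B 1 - A 1))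
        = b * (dist A B * dist A B) := by
      rw [← sq, dist_sq_eq]; ring
    rw [alongCoord, hY0, hY1, hsq, mul_div_assoc, mul_self_div_self]
  refine ⟨by rw [halong]; positivity, ?_, ?_⟩
  · rw [halong]; exact mul_le_of_le_one_left dist_nonneg (by linarith)
  · rw [acrossCoord, hY0, hY1]; ring

lemma coord_mem_box (hAB : A ≠ B) {P Y : P2} {r : ℝ} (hY : Y ∈ segment ℝ A B)
    (hPY : dist P Y ≤ r) :
    (0 ≤ alongCoord A B P + r ∧ alongCoord A B P + r ≤ dist A B + 2 * r) ∧
      (0 ≤ acrossCoord A B P + r ∧ acrossCoord A B P + r ≤ 2 * r) := by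
  obtain ⟨hY₁, hY₂, hY₃⟩ := coord_of_mem_segment hY
  obtain ⟨h₁, h₂⟩ := alongCoord_sub_mem_Icc hAB P Y
  obtain ⟨h₃, h₄⟩ := acrossCoord_sub_mem_Icc hAB P Y
  refine ⟨⟨?_, ?_⟩, ?_, ?_⟩ <;> linarith

end Frame

section Grid

noncomputable def cellIndex (A B : P2) (s r : ℝ) (P : P2) : ℤ × ℤ :=
  (⌊(alongCoord A B P + r) / s⌋, ⌊(acrossCoord A B P + r) / s⌋)

noncomputable def cells (ℓ s r : ℝ) : Finset (ℤ × ℤ) :=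
  Icc 0 ⌊(ℓ + 2 * r) / s⌋ ×ˢ Icc 0 ⌊2 * r / s⌋

variable {A B : P2} {s r : ℝ}

lemma floor_div_mem_Icc {x L : ℝ} (hs : 0 ≤ s) (hx₀ : 0 ≤ x) (hxL : x ≤ L) :
    ⌊x / s⌋ ∈ Icc 0 ⌊L / s⌋ :=
  mem_Icc.mpr ⟨Int.floor_nonneg.mpr (div_nonneg hx₀ hs),
    Int.floor_le_floor (div_le_div_of_nonneg_right hxL hs)⟩

lemma cellIndex_mem_cells (hs : 0 ≤ s) (hAB : A ≠ B) {P Y : P2} (hY : Y ∈ segment ℝ A B)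
    (hPY : dist P Y ≤ r) : cellIndex A B s r P ∈ cells (dist A B) s r := by
  obtain ⟨⟨h₁, h₂⟩, h₃, h₄⟩ := coord_mem_box hAB hY hPY
  exact mem_product.mpr ⟨floor_div_mem_Icc hs h₁ h₂, floor_div_mem_Icc hs h₃ h₄⟩

lemma abs_sub_lt_of_floor_div_eq {x y : ℝ} (hs : 0 < s) (h : ⌊(x + r) / s⌋ = ⌊(y + r) / s⌋) :
    |x - y| < s := by
  have h₁ := Int.abs_sub_lt_one_of_floor_eq_floor h
  rwa [← sub_div, add_sub_add_right_eq_sub, abs_div, abs_of_pos hs, div_lt_one hs] at h₁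

lemma dist_lt_of_cellIndex_eq (hs : 0 < s) (hAB : A ≠ B) {P Q : P2}
    (h : cellIndex A B s r P = cellIndex A B s r Q) : dist P Q < √2 * s := by
  have h₁ := abs_sub_lt_of_floor_div_eq hs (congrArg Prod.fst h)
  have h₂ := abs_sub_lt_of_floor_div_eq hs (congrArg Prod.snd h)
  have hsq : dist P Q ^ 2 < (√2 * s) ^ 2 := by
    rw [dist_sq_eq_coord hAB, mul_pow, Real.sq_sqrt zero_le_two, two_mul]
    exact add_lt_add (sq_lt_sq' (abs_lt.mp h₁).1 (abs_lt.mp h₁).2)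
      (sq_lt_sq' (abs_lt.mp h₂).1 (abs_lt.mp h₂).2)
  exact lt_of_pow_lt_pow_left₀ 2 (by positivity) hsq

lemma card_Icc_zero_floor_le {x : ℝ} (hx : 0 ≤ x) : ((Icc (0 : ℤ) ⌊x⌋).card : ℝ) ≤ x + 1 := by
  have hcard : ((Icc (0 : ℤ) ⌊x⌋).card : ℤ) = ⌊x⌋ + 1 := by
    rw [Int.card_Icc, sub_zero, Int.toNat_of_nonneg (by linarith [Int.floor_nonneg.mpr hx])]
  have hcard' : ((Icc (0 : ℤ) ⌊x⌋).card : ℝ) = ⌊x⌋ + 1 := by exact_mod_cast hcard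
  rw [hcard']
  linarith [Int.floor_le x]

lemma card_cells_le {ℓ : ℝ} (hs : 0 ≤ s) (hℓ : 0 ≤ ℓ) (hr : 0 ≤ r) :
    ((cells ℓ s r).card : ℝ) ≤ ((ℓ + 2 * r) / s + 1) * (2 * r / s + 1) := by
  rw [cells, card_product, Nat.cast_mul]
  exact mul_le_mul (card_Icc_zero_floor_le (by positivity)) (card_Icc_zero_floor_le (by positivity))
    (by positivity) (by positivity)

end Grid

section Endpoints

variable {α V : Type*} [PseudoMetricSpace α] [SeminormedAddCommGroup V] [NormedSpace ℝ V]

def Separated (ρ : ℝ) (mn pq : α × α) : Prop :=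
  ρ ≤ max (dist mn.1 pq.1) (dist mn.2 pq.2) ∧ ρ ≤ max (dist mn.1 pq.2) (dist mn.2 pq.1)

lemma Separated.of_eq_or_eq_swap {ρ : ℝ} {mn pq u v : α × α} (h : Separated ρ mn pq)
    (hu : u = mn ∨ u = mn.swap) (hv : v = pq ∨ v = pq.swap) : Separated ρ u v := by
  obtain ⟨h₁, h₂⟩ := h
  rcases hu with rfl | rfl <;> rcases hv with rfl | rfl <;>
    simp only [Separated, Prod.fst_swap, Prod.snd_swap] <;>
    first
    | exact ⟨h₁, h₂⟩
    | exact ⟨h₂, h₁⟩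
    | exact ⟨h₁.trans_eq (max_comm _ _), h₂.trans_eq (max_comm _ _)⟩
    | exact ⟨h₂.trans_eq (max_comm _ _), h₁.trans_eq (max_comm _ _)⟩

noncomputable def orientFrom (x : α) (pq : α × α) : α × α :=
  if dist pq.1 x ≤ dist pq.2 x then pq else pq.swap

lemma orientFrom_eq_or_eq_swap (x : α) (pq : α × α) :
    orientFrom x pq = pq ∨ orientFrom x pq = pq.swap := by
  unfold orientFrom; split_ifs <;> simp

lemma dist_orientFrom_le {x : V} {pq : V × V} (hx : x ∈ segment ℝ pq.1 pq.2) :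
    dist (orientFrom x pq).1 x ≤ dist pq.1 pq.2 / 2 ∧
      dist (orientFrom x pq).2 x ≤ dist pq.1 pq.2 := by
  have hsplit := dist_add_dist_of_mem_segment hx
  rw [dist_comm x] at hsplit
  unfold orientFrom
  split_ifs with h
  · exact ⟨by linarith, by linarith [dist_nonneg (x := pq.1) (y := x)]⟩
  · exact ⟨by simp only [Prod.fst_swap]; linarith,
      by simp only [Prod.snd_swap]; linarith [dist_nonneg (x := pq.2) (y := x)]⟩

end Endpoints

theorem card_le_card_cells_mul_card_cells {A B : P2} {s L : ℝ} (hs : 0 < s) (hAB : A ≠ B)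
    (E : Finset (P2 × P2)) (hcross : ∀ pq ∈ E, (segment ℝ pq.1 pq.2 ∩ segment ℝ A B).Nonempty)
    (hlen : ∀ pq ∈ E, dist pq.1 pq.2 ≤ L)
    (hsep : ∀ mn ∈ E, ∀ pq ∈ E, mn ≠ pq → Separated (√2 * s) mn pq) :
    E.card ≤ (cells (dist A B) s (L / 2)).card * (cells (dist A B) s L).card := by
  choose! X hX using hcross
  let cellPair : P2 × P2 → (ℤ × ℤ) × (ℤ × ℤ) := fun pq =>
    (cellIndex A B s (L / 2) (orientFrom (X pq) pq).1, cellIndex A B s L (orientFrom (X pq) pq).2)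
  rw [← card_product]
  refine card_le_card_of_injOn cellPair (fun pq hpq => ?_) (fun mn hmn pq hpq h => ?_)
  · obtain ⟨hnear, hfar⟩ := dist_orientFrom_le (hX pq hpq).1
    exact mem_product.mpr
      ⟨cellIndex_mem_cells hs.le hAB (hX pq hpq).2
        (hnear.trans (div_le_div_of_nonneg_right (hlen pq hpq) zero_le_two)),
      cellIndex_mem_cells hs.le hAB (hX pq hpq).2 (hfar.trans (hlen pq hpq))⟩
  · by_contra hne
    have hnear := dist_lt_of_cellIndex_eq hs hAB (congrArg Prod.fst h)
    have hfar := dist_lt_of_cellIndex_eq hs hAB (congrArg Prod.snd h)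
    have hmax := ((hsep mn hmn pq hpq hne).of_eq_or_eq_swap
      (orientFrom_eq_or_eq_swap (X mn) mn) (orientFrom_eq_or_eq_swap (X pq) pq)).1
    exact hmax.not_gt (max_lt hnear hfar)

lemma grid_product_le_sq {w c : ℝ} (hw : 2 * √2 ≤ w) (hc : 0 ≤ c) :
    (w + c + 1) * (w + 1) * ((2 * w + c + 1) * (2 * w + 1)) ≤ ((2 * w + c) * (2 * w)) ^ 2 := by
  have hw' : (2.828 : ℝ) ≤ w := by
    nlinarith [Real.sq_sqrt (zero_le_two (α := ℝ)), Real.sqrt_nonneg 2]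
  have hnear : 4 * ((w + 1) * (2 * w + 1)) ≤ 13 * w ^ 2 := by nlinarith
  have hfar : 13 * ((w + c + 1) * (2 * w + c + 1)) ≤ 16 * (2 * w + c) ^ 2 := by nlinarith
  nlinarith [mul_le_mul hfar hnear (by positivity) (by positivity)]

theorem card_le_sq_of_crossing {A B : P2} {s L : ℝ} (hs : 0 < s) (hAB : A ≠ B)
    (hL : 2 * √2 * s ≤ L) (E : Finset (P2 × P2))
    (hcross : ∀ pq ∈ E, (segment ℝ pq.1 pq.2 ∩ segment ℝ A B).Nonempty)
    (hlen : ∀ pq ∈ E, dist pq.1 pq.2 ≤ L)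
    (hsep : ∀ mn ∈ E, ∀ pq ∈ E, mn ≠ pq → Separated (√2 * s) mn pq) :
    (E.card : ℝ) ≤ ((2 * L + dist A B) * (2 * L) / s ^ 2) ^ 2 := by
  set d := dist A B
  have hL₀ : 0 ≤ L := le_trans (by positivity) hL
  have hw : 2 * √2 ≤ L / s := (le_div_iff₀ hs).mpr hL
  calc (E.card : ℝ)
      ≤ (cells d s (L / 2)).card * (cells d s L).card := by
        exact_mod_cast card_le_card_cells_mul_card_cells hs hAB E hcross hlen hsep
    _ ≤ ((d + 2 * (L / 2)) / s + 1) * (2 * (L / 2) / s + 1)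
          * (((d + 2 * L) / s + 1) * (2 * L / s + 1)) :=
        mul_le_mul (card_cells_le hs.le dist_nonneg (by positivity))
          (card_cells_le hs.le dist_nonneg hL₀) (by positivity) (by positivity)
    _ = (L / s + d / s + 1) * (L / s + 1) * ((2 * (L / s) + d / s + 1) * (2 * (L / s) + 1)) := by
        ring
    _ ≤ ((2 * (L / s) + d / s) * (2 * (L / s))) ^ 2 := grid_product_le_sq hw (by positivity)
    _ = ((2 * L + d) * (2 * L) / s ^ 2) ^ 2 := by ring

end SpannerCrossing

open SpannerCrossing

theorem stmt9_general (t α β : ℝ) (ht : 1 < t) (hα : 0 < α) (hαβ : α ≤ β)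
    (A B : P2) (hAB : 0 < dist A B)
    (E : Finset (P2 × P2))
    (hcross : ∀ pq ∈ E,
      (openSegment ℝ pq.1 pq.2 ∩ openSegment ℝ A B).Nonempty)
    (hlen : ∀ pq ∈ E, α * dist A B ≤ dist pq.1 pq.2 ∧ dist pq.1 pq.2 ≤ β * dist A B)
    (hsep : ∀ mn ∈ E, ∀ pq ∈ E, mn ≠ pq →
      max (dist mn.1 pq.1) (dist mn.2 pq.2) ≥
        ((t - 1) / (2 * t)) * min (dist mn.1 mn.2) (dist pq.1 pq.2) ∧
      max (dist mn.1 pq.2) (dist mn.2 pq.1) ≥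
        ((t - 1) / (2 * t)) * min (dist mn.1 mn.2) (dist pq.1 pq.2)) :
    (E.card : ℝ) ≤ ((2 * β * (2 * β + 1) / α ^ 2) * (8 * t ^ 2 / (t - 1) ^ 2)) ^ 2 := by
  set d := dist A B
  have ht₁ : 0 < t - 1 := by linarith
  set δ := (t - 1) / (2 * t) * (α * d) with hδ
  set s := δ / √2 with hs_def
  have hs : 0 < s := by positivity
  have hδs : √2 * s = δ := mul_div_cancel₀ δ (by positivity)
  have hsep' : ∀ mn ∈ E, ∀ pq ∈ E, mn ≠ pq → Separated (√2 * s) mn pq := by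
    intro mn hmn pq hpq hne
    have hδle : δ ≤ (t - 1) / (2 * t) * min (dist mn.1 mn.2) (dist pq.1 pq.2) :=
      mul_le_mul_of_nonneg_left (le_min (hlen mn hmn).1 (hlen pq hpq).1) (by positivity)
    rw [hδs]
    exact ⟨hδle.trans (hsep mn hmn pq hpq hne).1, hδle.trans (hsep mn hmn pq hpq hne).2⟩
  have hL : 2 * √2 * s ≤ β * d := by
    have hcoef : 2 * ((t - 1) / (2 * t)) ≤ 1 := by
      rw [mul_div_assoc', div_le_one (by positivity)]; linarith
    rw [mul_assoc, hδs, hδ, ← mul_assoc]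
    linarith [mul_le_mul_of_nonneg_right hcoef (by positivity : 0 ≤ α * d),
      mul_le_mul_of_nonneg_right hαβ hAB.le]
  have hcount := card_le_sq_of_crossing hs (dist_pos.mp hAB) hL E
    (fun pq h => (hcross pq h).mono
      (Set.inter_subset_inter (openSegment_subset_segment ..) (openSegment_subset_segment ..)))
    (fun pq h => (hlen pq h).2) hsep'
  convert hcount using 2
  rw [hs_def, hδ]
  field_simp
  rw [Real.sq_sqrt zero_le_two]
  ring

/-- Proposition: the number of spanner segments crossing a segment AB whose
lengths lie between α·‖AB‖ and β·‖AB‖ is at most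
[(2β(2β+1)/α²)·(8t²/(t−1)²)]². -/
theorem stmt9 (t α β : ℝ) (ht : 1 < t) (hα : 0 < α) (hαβ : α ≤ β)
    (A B : P2) (hAB : 0 < dist A B)
    (E : Finset (P2 × P2))
    (hnd : ∀ pq ∈ E, pq.1 ≠ pq.2)
    (hswap : ∀ pq ∈ E, (pq.2, pq.1) ∉ E)
    (hcross : ∀ pq ∈ E,
      (openSegment ℝ pq.1 pq.2 ∩ openSegment ℝ A B).Nonempty)
    (hlen : ∀ pq ∈ E, α * dist A B ≤ dist pq.1 pq.2 ∧ dist pq.1 pq.2 ≤ β * dist A B)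
    (hsep : ∀ mn ∈ E, ∀ pq ∈ E, mn ≠ pq →
      max (dist mn.1 pq.1) (dist mn.2 pq.2) ≥
        ((t - 1) / (2 * t)) * min (dist mn.1 mn.2) (dist pq.1 pq.2) ∧
      max (dist mn.1 pq.2) (dist mn.2 pq.1) ≥
        ((t - 1) / (2 * t)) * min (dist mn.1 mn.2) (dist pq.1 pq.2)) :
    (E.card : ℝ) ≤ ((2 * β * (2 * β + 1) / α ^ 2) * (8 * t ^ 2 / (t - 1) ^ 2)) ^ 2 :=
  stmt9_general t α β ht hα hαβ A B hAB E hcross hlen hsep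
end

section
/- Let t > 1, δ > 0, and set l = t·Δx, l' = (t+δ)·Δx for some Δx > 0. If j − i ≤ t(t² − 1)/(2δ), then ((j−i−1)·l + l')² ≤ t²·((j−i)² + (t+δ)² − 1)·(Δx)². -/
/-- Key algebraic inequality for the crossing construction: if
j − i ≤ t(t²−1)/(2δ), then the proposed path length (j−i−1)l + l'
(with l = tΔx, l' = (t+δ)Δx) satisfies
((j−i−1)l + l')² ≤ t²((j−i)² + (t+δ)² − 1)(Δx)². -/
theorem stmt13 (t δ Δx i j l l' : ℝ) (ht : 1 < t) (hδ : 0 < δ) (hΔx : 0 < Δx)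
    (hl : l = t * Δx) (hl' : l' = (t + δ) * Δx)
    (hji : 1 ≤ j - i) (hupper : j - i ≤ t * (t ^ 2 - 1) / (2 * δ)) :
    ((j - i - 1) * l + l') ^ 2 ≤ t ^ 2 * ((j - i) ^ 2 + (t + δ) ^ 2 - 1) * Δx ^ 2 := by
  subst hl hl'
  have h2 : (j - i) * (2 * δ) ≤ t * (t ^ 2 - 1) :=
    (le_div_iff₀ (by positivity)).mp hupper
  have h3 : (j - i) * (2 * δ) * (t * Δx ^ 2) ≤ t * (t ^ 2 - 1) * (t * Δx ^ 2) :=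
    mul_le_mul_of_nonneg_right h2 (by positivity)
  nlinarith [mul_nonneg (mul_nonneg (sq_nonneg δ) (sq_nonneg Δx)) (by nlinarith : (0:ℝ) ≤ t ^ 2 - 1),
    mul_pos (mul_pos (mul_pos hδ hΔx) hΔx) (by positivity : (0:ℝ) < t ^ 3)]
end

section
/- Let t > 1, δ > 0, Δx > 0, l = t·Δx, l' = (t+δ)·Δx. If j − i ≥ 9t((t+δ)² − 1)/(2δ), then ((j−i−1)·l + l')² > t²·((j−i)² + 9(t+δ)² − 9)·(Δx)². -/
/-- Key algebraic inequality for the existence of a long edge: if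
j − i ≥ 9t((t+δ)²−1)/(2δ), then with l = tΔx and l' = (t+δ)Δx,
((j−i−1)l + l')² > t²((j−i)² + 9(t+δ)² − 9)(Δx)². -/
theorem stmt14 (t δ Δx i j l l' : ℝ) (ht : 1 < t) (hδ : 0 < δ) (hΔx : 0 < Δx)
    (hl : l = t * Δx) (hl' : l' = (t + δ) * Δx)
    (hji : 1 ≤ j - i) (hlower : 9 * t * ((t + δ) ^ 2 - 1) / (2 * δ) ≤ j - i) :
    ((j - i - 1) * l + l') ^ 2 > t ^ 2 * ((j - i) ^ 2 + 9 * (t + δ) ^ 2 - 9) * Δx ^ 2 := by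
  subst hl hl'
  have h2 : 9 * t * ((t + δ) ^ 2 - 1) ≤ (j - i) * (2 * δ) := by
    rw [div_le_iff₀ (by positivity)] at hlower
    linarith
  have key : t ^ 2 * ((j - i) ^ 2 + 9 * (t + δ) ^ 2 - 9) < ((j - i - 1) * t + (t + δ)) ^ 2 := by
    nlinarith [sq_nonneg δ, mul_pos hδ hδ, sq_nonneg (j - i), ht.le]
  nlinarith [sq_nonneg Δx, mul_pos hΔx hΔx]
end

section
/- Let P₀Q₀, P₁Q₁, …, P_{m}Q_{m} be segments in ℝ², all making angle at most θ with a fixed line l (θ < π/2), with the points P₀, P₁, …, P_m in that order having orthogonal projections P'₀, …, P'_m onto l in that order, with each dist(P_i, P_{i+1}) > c·min(dist(P_i,Q_i), dist(P_{i+1},Q_{i+1})) for a constant c > 0, where each dist(P_iQ_i) ≥ dist(P₀Q₀), and with the projection P'_m lying within the projection interval [P'₀, Q'₀] of segment P₀Q₀. Then m < 2/(c·cos θ). -/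
/-!
Project everything onto the direction `v` of the line. Since each step `P i → P (i+1)` makes angle
at most `θ` with `v` and is longer than `c` times the length `d` of `P₀Q₀` (all segments are at
least that long), each step advances the projection by more than `c · cos θ · d`. After `m` steps
the projection of `P_m` is still within the projection of `P₀Q₀`, which has length at most `d`,
so `m · c · cos θ · d < d` as soon as `m ≥ 1`; this forces `d > 0` and `m < 1 / (c cos θ)`.
-/

open InnerProductGeometry Real
open scoped RealInnerProductSpace

theorem Fin.sum_univ_succ_sub_castSucc {M : Type*} [AddCommGroup M] {n : ℕ}
    (f : Fin (n + 1) → M) : ∑ i : Fin n, (f i.succ - f i.castSucc) = f (Fin.last n) - f 0 := by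
  induction n with
  | zero => simp
  | succ n ih =>
    rw [Fin.sum_univ_castSucc]
    simp only [Fin.succ_castSucc]
    rw [ih (fun i ↦ f i.castSucc)]
    simp

section InnerProductSpace

variable {E : Type*} [NormedAddCommGroup E] [InnerProductSpace ℝ E]

theorem cos_mul_norm_mul_norm_le_inner_of_angle_le {x v : E} {θ : ℝ} (hθ : θ ≤ π)
    (h : angle x v ≤ θ) : cos θ * (‖x‖ * ‖v‖) ≤ ⟪x, v⟫ := by
  rw [← cos_angle_mul_norm_mul_norm]
  gcongr
  exact cos_le_cos_of_nonneg_of_le_pi (angle_nonneg x v) hθ h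

theorem inner_sub_inner_le_dist_mul_norm_of_mem_uIcc {x p q v : E}
    (h : ⟪x, v⟫ ∈ Set.uIcc ⟪p, v⟫ ⟪q, v⟫) : ⟪x, v⟫ - ⟪p, v⟫ ≤ dist p q * ‖v‖ :=
  calc ⟪x, v⟫ - ⟪p, v⟫ ≤ |⟪q, v⟫ - ⟪p, v⟫| := (le_abs_self _).trans (Set.abs_sub_left_of_mem_uIcc h)
    _ = |⟪q - p, v⟫| := by rw [inner_sub_left]
    _ ≤ dist p q * ‖v‖ := by
      rw [dist_comm, dist_eq_norm]
      exact abs_real_inner_le_norm _ _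

end InnerProductSpace

theorem stmt15_general (m : ℕ) (θ c : ℝ) (hθ0 : 0 ≤ θ) (hθ : θ < Real.pi / 2) (hc : 0 < c)
    (P Q : Fin (m + 1) → P2) (v : P2) (hv : ‖v‖ = 1)
    (hcons : ∀ i : Fin m, InnerProductGeometry.angle (P i.succ - P i.castSucc) v ≤ θ)
    (hstep : ∀ i : Fin m, dist (P i.castSucc) (P i.succ) >
      c * min (dist (P i.castSucc) (Q i.castSucc)) (dist (P i.succ) (Q i.succ)))
    (hlong : ∀ i, dist (P 0) (Q 0) ≤ dist (P i) (Q i))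
    (hin : (inner ℝ (P (Fin.last m)) v : ℝ) ∈
      Set.uIcc (inner ℝ (P 0) v : ℝ) (inner ℝ (Q 0) v : ℝ)) :
    (m : ℝ) < 2 / (c * Real.cos θ) := by
  have hcos : 0 < cos θ := cos_pos_of_mem_Ioo ⟨by linarith [pi_pos], hθ⟩
  set d := dist (P 0) (Q 0)
  have hadvance (i : Fin m) : cos θ * (c * d) < ⟪P i.succ, v⟫ - ⟪P i.castSucc, v⟫ := by
    have hlen : c * d < ‖P i.succ - P i.castSucc‖ := by
      rw [← dist_eq_norm, dist_comm]
      exact (mul_le_mul_of_nonneg_left (le_min (hlong _) (hlong _)) hc.le).trans_lt (hstep i)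
    calc cos θ * (c * d) < cos θ * (‖P i.succ - P i.castSucc‖ * ‖v‖) := by
          rw [hv, mul_one]; gcongr
      _ ≤ ⟪P i.succ - P i.castSucc, v⟫ :=
          cos_mul_norm_mul_norm_le_inner_of_angle_le (by linarith [pi_pos]) (hcons i)
      _ = _ := inner_sub_left _ _ _
  rcases Nat.eq_zero_or_pos m with rfl | hm
  · simp only [Nat.cast_zero]; positivity
  have htotal : m * (cos θ * (c * d)) < d := by
    calc m * (cos θ * (c * d)) = ∑ _i : Fin m, cos θ * (c * d) := by simp
      _ < ∑ i : Fin m, (⟪P i.succ, v⟫ - ⟪P i.castSucc, v⟫) :=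
          Finset.sum_lt_sum_of_nonempty (Finset.univ_nonempty_iff.2 ⟨⟨0, hm⟩⟩) fun i _ ↦ hadvance i
      _ = ⟪P (Fin.last m), v⟫ - ⟪P 0, v⟫ := Fin.sum_univ_succ_sub_castSucc (⟪P ·, v⟫)
      _ ≤ d := by simpa [hv] using inner_sub_inner_le_dist_mul_norm_of_mem_uIcc hin
  have hd : 0 < d := (by positivity : (0 : ℝ) ≤ m * (cos θ * (c * d))).trans_lt htotal
  rw [lt_div_iff₀ (by positivity)]
  nlinarith

/-- Counting argument: segments P₀Q₀, …, P_mQ_m all nearly parallel to a line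
with direction v, whose left endpoints project in order, with consecutive left
endpoints at distance more than c·min of adjacent segment lengths, all segments
at least as long as P₀Q₀, and with the projection of P_m within the projection
interval of P₀Q₀; then m < 2/(c·cos θ). -/
theorem stmt15 (m : ℕ) (θ c : ℝ) (hθ0 : 0 ≤ θ) (hθ : θ < Real.pi / 2) (hc : 0 < c)
    (P Q : Fin (m + 1) → P2) (v : P2) (hv : ‖v‖ = 1)
    (hseg : ∀ i, P i ≠ Q i)
    (hang : ∀ i, InnerProductGeometry.angle (Q i - P i) v ≤ θ)
    (hcons : ∀ i : Fin m, InnerProductGeometry.angle (P i.succ - P i.castSucc) v ≤ θ)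
    (hord : ∀ i : Fin m, (inner ℝ (P i.castSucc) v : ℝ) ≤ (inner ℝ (P i.succ) v : ℝ))
    (hstep : ∀ i : Fin m, dist (P i.castSucc) (P i.succ) >
      c * min (dist (P i.castSucc) (Q i.castSucc)) (dist (P i.succ) (Q i.succ)))
    (hlong : ∀ i, dist (P 0) (Q 0) ≤ dist (P i) (Q i))
    (hin : (inner ℝ (P (Fin.last m)) v : ℝ) ∈
      Set.uIcc (inner ℝ (P 0) v : ℝ) (inner ℝ (Q 0) v : ℝ)) :
    (m : ℝ) < 2 / (c * Real.cos θ) :=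
  stmt15_general m θ c hθ0 hθ hc P Q v hv hcons hstep hlong hin
end
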